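/- arXiv:2406.10064 — 3 statements merged into one kernel-verified Lean document; each statement's English description precedes it below -/
import Mathlib

section
/- Let L be a finite-dimensional non-abelian Lie algebra over the finite field F_q. Then d(L) ≤ (q² + q − 1)/q³. -/
/-!
Count commuting pairs as `∑ x, |C(x)|`, where `C(x) = ker (ad x)` is the centralizer, a subspace.
It is all of `L` exactly when `x` is central, and otherwise a proper subspace, so
`|C(x)| ≤ |L| / q`.
This gives `d(L) ≤ (1 + (q - 1) |Z| / |L|) / q`. If `L` is not abelian, a non-central `x` gives
`Z < C(x) < L`, so `|Z| ≤ |L| / q²`, and the bound becomes `(q² + q - 1) / q³`.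
-/

/-- The commutativity degree of a finite Lie ring `L`:
the probability that two randomly chosen elements commute. -/
noncomputable def commDeg (L : Type*) [LieRing L] : ℚ :=
  (Nat.card {p : L × L // ⁅p.1, p.2⁆ = 0} : ℚ) / (Nat.card L : ℚ) ^ 2

theorem Submodule.natCard_mul_le_of_lt {K V : Type*} [Field K] [Finite K] [AddCommGroup V]
    [Module K V] [Finite V] {W W' : Submodule K V} (h : W < W') :
    Nat.card W * Nat.card K ≤ Nat.card W' := by
  rw [Module.natCard_eq_pow_finrank (K := K) (V := W),
    Module.natCard_eq_pow_finrank (K := K) (V := W'), ← pow_succ]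
  exact Nat.pow_le_pow_right Nat.card_pos (Submodule.finrank_lt_finrank_of_lt h)

namespace LieAlgebra

variable {F L : Type*} [Field F] [LieRing L] [LieAlgebra F L]

theorem center_le_ker_ad (x : L) : (center F L).toSubmodule ≤ (ad F L x).ker := fun _ hz =>
  (LieModule.mem_maxTrivSubmodule F L L _).mp hz x

theorem self_mem_ker_ad (x : L) : x ∈ (ad F L x).ker := lie_self x

theorem ker_ad_eq_top_iff (x : L) : (ad F L x).ker = ⊤ ↔ x ∈ center F L := by
  simp only [Submodule.eq_top_iff', LinearMap.mem_ker, ad_apply, LieModule.mem_maxTrivSubmodule]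
  exact forall_congr' fun y => by rw [← lie_skew, neg_eq_zero]

theorem natCard_commuting_pairs_eq_sum [Fintype L] :
    Nat.card {p : L × L // ⁅p.1, p.2⁆ = 0} = ∑ x : L, Nat.card (ad F L x).ker := by
  rw [Nat.card_congr (Equiv.subtypeProdEquivSigmaSubtype fun x y : L => ⁅x, y⁆ = 0),
    Nat.card_sigma]
  rfl

variable [Finite F] [Finite L]

theorem natCard_ker_ad_mul_le {x : L} (hx : x ∉ center F L) :
    Nat.card (ad F L x).ker * Nat.card F ≤ Nat.card L := by
  have := Submodule.natCard_mul_le_of_lt (lt_top_iff_ne_top.mpr (mt (ker_ad_eq_top_iff x).mp hx))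
  rwa [Nat.card_congr Submodule.topEquiv.toEquiv] at this

theorem natCard_center_mul_sq_le (h : ¬IsLieAbelian L) :
    Nat.card (center F L) * Nat.card F ^ 2 ≤ Nat.card L := by
  obtain ⟨x, hx⟩ : ∃ x : L, x ∉ center F L := by
    by_contra! hall
    exact h ((isLieAbelian_iff_center_eq_top F L).mpr (eq_top_iff.mpr fun y _ => hall y))
  have hlt : (center F L).toSubmodule < (ad F L x).ker :=
    lt_of_le_of_ne' (center_le_ker_ad x) fun h => hx <| by
      rw [← LieSubmodule.mem_toSubmodule, ← h]; exact self_mem_ker_ad x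
  calc Nat.card (center F L) * Nat.card F ^ 2
      ≤ Nat.card (ad F L x).ker * Nat.card F := by
        rw [sq, ← mul_assoc]; exact Nat.mul_le_mul_right _ (Submodule.natCard_mul_le_of_lt hlt)
    _ ≤ Nat.card L := natCard_ker_ad_mul_le hx

theorem natCard_commuting_pairs_mul_le [Fintype L] :
    (Nat.card {p : L × L // ⁅p.1, p.2⁆ = 0} * Nat.card F : ℚ) ≤
      Nat.card L * (Nat.card L + Nat.card (center F L) * ((Nat.card F : ℚ) - 1)) := by
  classical
  have hpoint (x : L) : (Nat.card (ad F L x).ker * Nat.card F : ℚ) ≤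
      Nat.card L + if x ∈ center F L then Nat.card L * ((Nat.card F : ℚ) - 1) else 0 := by
    split_ifs with hx
    · rw [(ker_ad_eq_top_iff x).mpr hx, Nat.card_congr Submodule.topEquiv.toEquiv]
      exact le_of_eq (by ring)
    · simpa using (Nat.cast_le (α := ℚ)).mpr (natCard_ker_ad_mul_le hx)
  have hcenter : (Finset.univ.filter (· ∈ center F L)).card = Nat.card (center F L) := by
    rw [← Fintype.card_subtype, Nat.card_eq_fintype_card]
  calc (Nat.card {p : L × L // ⁅p.1, p.2⁆ = 0} * Nat.card F : ℚ)
      = ∑ x : L, (Nat.card (ad F L x).ker * Nat.card F : ℚ) := by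
        rw [natCard_commuting_pairs_eq_sum (F := F), Nat.cast_sum, Finset.sum_mul]
    _ ≤ ∑ x : L,
          (Nat.card L + if x ∈ center F L then Nat.card L * ((Nat.card F : ℚ) - 1) else 0) :=
        Finset.sum_le_sum fun x _ => hpoint x
    _ = Nat.card L * (Nat.card L + Nat.card (center F L) * ((Nat.card F : ℚ) - 1)) := by
        rw [Finset.sum_add_distrib, ← Finset.sum_filter, Finset.sum_const, Finset.sum_const,
          hcenter, Finset.card_univ, ← Nat.card_eq_fintype_card]
        simp only [nsmul_eq_mul]; ring

theorem commDeg_le :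
    commDeg L ≤ (Nat.card L + Nat.card (center F L) * ((Nat.card F : ℚ) - 1)) /
      (Nat.card F * Nat.card L) := by
  have := Fintype.ofFinite L
  have hL : (0 : ℚ) < Nat.card L := Nat.cast_pos.mpr Nat.card_pos
  have hF : (0 : ℚ) < Nat.card F := Nat.cast_pos.mpr Nat.card_pos
  rw [commDeg, div_le_div_iff₀ (by positivity) (by positivity)]
  calc (Nat.card {p : L × L // ⁅p.1, p.2⁆ = 0} : ℚ) * (Nat.card F * Nat.card L)
      = Nat.card {p : L × L // ⁅p.1, p.2⁆ = 0} * Nat.card F * Nat.card L := by ring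
    _ ≤ Nat.card L * (Nat.card L + Nat.card (center F L) * ((Nat.card F : ℚ) - 1)) *
          Nat.card L :=
        mul_le_mul_of_nonneg_right natCard_commuting_pairs_mul_le hL.le
    _ = _ := by ring

end LieAlgebra

open LieAlgebra in
/-- If `L` is a finite-dimensional non-abelian Lie algebra over the finite
field `F_q`, then `d(L) ≤ (q² + q − 1)/q³`. -/
theorem commDeg_le_general_bound
    (q : ℕ) (F : Type*) [Field F] [Fintype F] (hF : Fintype.card F = q)
    (L : Type*) [LieRing L] [LieAlgebra F L] [Finite L]
    (hna : ¬IsLieAbelian L) :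
    commDeg L ≤ ((q : ℚ) ^ 2 + q - 1) / (q : ℚ) ^ 3 := by
  rw [Fintype.card_eq_nat_card] at hF
  subst hF
  have hq : (1 : ℚ) ≤ Nat.card F := Nat.one_le_cast.mpr Nat.card_pos
  have hL : (0 : ℚ) < Nat.card L := Nat.cast_pos.mpr Nat.card_pos
  have hcenter : (Nat.card (center F L) * Nat.card F ^ 2 : ℚ) ≤ Nat.card L := by
    exact_mod_cast natCard_center_mul_sq_le hna
  refine (commDeg_le (F := F)).trans ?_
  rw [div_le_div_iff₀ (by positivity) (by positivity)]
  nlinarith [mul_le_mul_of_nonneg_right hcenter (sub_nonneg.mpr hq)]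
end

section
/- Let L be a finite-dimensional Lie algebra over the finite field F_q and let t = dim L/Z(L). Then d(L) ≥ 1/q^t + 1/q^{t−1} − 1/q^{2t−1}. -/
/-!
Counting commuting pairs row by row, `d(L) |L|² = ∑ₓ |C_L(x)|`. A central `x` has `C_L(x) = L`,
while for a non-central `x` the centralizer `C_L(x) = ker (ad x)` contains `Z(L) + F x`, a subspace
of dimension `dim Z(L) + 1`, so `|C_L(x)| ≥ q |Z(L)|`. Writing `ρ = |Z(L)| / |L| = q^(-t)` this gives
`d(L) ≥ ρ + (1 - ρ) q ρ = q^(-t) + q^(1-t) - q^(1-2t)`.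
-/

open LieAlgebra

theorem Submodule.natCard_mul_natCard_le_of_lt {F V : Type*} [Field F] [Finite F]
    [AddCommGroup V] [Module F V] [Finite V] {S T : Submodule F V} (h : S < T) :
    Nat.card F * Nat.card S ≤ Nat.card T := by
  rw [Module.natCard_eq_pow_finrank (K := F) (V := S),
    Module.natCard_eq_pow_finrank (K := F) (V := T), ← pow_succ']
  exact Nat.pow_le_pow_right Nat.card_pos (Submodule.finrank_lt_finrank_of_lt h)

theorem natCard_commuting_pairs_eq_sum (L : Type*) [LieRing L] [Fintype L] :
    Nat.card {p : L × L // ⁅p.1, p.2⁆ = 0} = ∑ x : L, Nat.card {y : L // ⁅x, y⁆ = 0} := by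
  rw [Nat.card_congr (Equiv.subtypeProdEquivSigmaSubtype fun x y : L => ⁅x, y⁆ = 0),
    Nat.card_sigma]

section Centralizer

variable {F L : Type*} [Field F] [LieRing L] [LieAlgebra F L]

theorem lie_eq_zero_of_mem_center {x : L} (hx : x ∈ center F L) (y : L) : ⁅x, y⁆ = 0 := by
  rw [← lie_skew, (LieModule.mem_maxTrivSubmodule F L L x).1 hx y, neg_zero]

theorem natCard_centralizer_of_mem_center {x : L} (hx : x ∈ center F L) :
    Nat.card {y : L // ⁅x, y⁆ = 0} = Nat.card L :=
  Nat.card_congr (Equiv.subtypeUnivEquiv (lie_eq_zero_of_mem_center hx))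

theorem center_sup_span_le_ker_ad (x : L) :
    (center F L).toSubmodule ⊔ Submodule.span F {x} ≤ LinearMap.ker (ad F L x) := by
  refine sup_le (fun y hy => ?_) ?_
  · exact (LieModule.mem_maxTrivSubmodule F L L y).1 hy x
  · simp

theorem natCard_mul_natCard_center_le_natCard_centralizer [Finite F] [Finite L] {x : L}
    (hx : x ∉ center F L) :
    Nat.card F * Nat.card (center F L) ≤ Nat.card {y : L // ⁅x, y⁆ = 0} := by
  have hlt : (center F L).toSubmodule < (center F L).toSubmodule ⊔ Submodule.span F {x} :=
    left_lt_sup.2 fun h => hx (h (Submodule.mem_span_singleton_self x))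
  calc Nat.card F * Nat.card (center F L)
      ≤ Nat.card ((center F L).toSubmodule ⊔ Submodule.span F {x} : Submodule F L) :=
        Submodule.natCard_mul_natCard_le_of_lt hlt
    _ ≤ Nat.card (LinearMap.ker (ad F L x)) :=
        Nat.card_mono (Set.toFinite _) (center_sup_span_le_ker_ad x)
    _ = Nat.card {y : L // ⁅x, y⁆ = 0} :=
        Nat.card_congr (Equiv.subtypeEquivRight fun y => by simp)

end Centralizer

section Counting

variable (F L : Type*) [Field F] [LieRing L] [LieAlgebra F L] [Finite L]

theorem natCard_center_div_natCard :
    (Nat.card (center F L) / Nat.card L : ℚ) =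
      (Nat.card F : ℚ) ^ (-(Module.finrank F (L ⧸ center F L) : ℤ)) := by
  have hquot : Nat.card (L ⧸ (center F L).toSubmodule) =
      Nat.card F ^ Module.finrank F (L ⧸ center F L) :=
    Module.natCard_eq_pow_finrank
  have hZ : Nat.card (center F L).toSubmodule = Nat.card (center F L) := rfl
  rw [(center F L).toSubmodule.card_eq_card_quotient_mul_card, hZ, hquot, zpow_neg, zpow_natCast,
    Nat.cast_mul, div_mul_cancel_left₀ (Nat.cast_ne_zero.2 Nat.card_pos.ne'), Nat.cast_pow]

variable [Finite F]

theorem natCard_commuting_pairs_ge :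
    Nat.card (center F L) * Nat.card L +
        (Nat.card L - Nat.card (center F L)) * (Nat.card F * Nat.card (center F L)) ≤
      Nat.card {p : L × L // ⁅p.1, p.2⁆ = 0} := by
  classical
  have := Fintype.ofFinite L
  have hsplit := Finset.card_filter_add_card_filter_not (s := Finset.univ) (· ∈ center F L)
  set inZ := Finset.univ.filter (· ∈ center F L)
  set notInZ := Finset.univ.filter (· ∉ center F L)
  have hZ : inZ.card = Nat.card (center F L) := by
    rw [← Fintype.card_subtype, Fintype.card_eq_nat_card]
  have hZc : notInZ.card = Nat.card L - Nat.card (center F L) := by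
    rw [Finset.card_univ, Fintype.card_eq_nat_card] at hsplit
    omega
  calc _ = ∑ x ∈ inZ, Nat.card L + ∑ x ∈ notInZ, Nat.card F * Nat.card (center F L) := by
        simp only [Finset.sum_const, hZ, hZc, smul_eq_mul]
    _ ≤ ∑ x ∈ inZ, Nat.card {y : L // ⁅x, y⁆ = 0} +
          ∑ x ∈ notInZ, Nat.card {y : L // ⁅x, y⁆ = 0} := by
        gcongr with x hx x hx
        · exact (natCard_centralizer_of_mem_center (Finset.mem_filter.1 hx).2).ge
        · exact natCard_mul_natCard_center_le_natCard_centralizer (Finset.mem_filter.1 hx).2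
    _ = _ := by rw [Finset.sum_filter_add_sum_filter_not, natCard_commuting_pairs_eq_sum]

theorem commDeg_ge_of_center :
    (Nat.card (center F L) / Nat.card L : ℚ) +
        (1 - Nat.card (center F L) / Nat.card L) *
          (Nat.card F * (Nat.card (center F L) / Nat.card L)) ≤
      commDeg L := by
  have hle : Nat.card (center F L) ≤ Nat.card L := Finite.card_subtype_le _
  have hN : (0 : ℚ) < Nat.card L := Nat.cast_pos.2 Nat.card_pos
  rw [commDeg, le_div_iff₀ (pow_pos hN 2)]
  calc _ = ((Nat.card (center F L) * Nat.card L +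
        (Nat.card L - Nat.card (center F L)) * (Nat.card F * Nat.card (center F L)) : ℕ) : ℚ) := by
        push_cast [hle]
        field_simp
    _ ≤ _ := by exact_mod_cast natCard_commuting_pairs_ge F L

end Counting

/-- If `L` is a finite-dimensional Lie algebra over the finite field `F_q`
and `t = dim L/Z(L)`, then `d(L) ≥ 1/q^t + 1/q^(t−1) − 1/q^(2t−1)`. -/
theorem commDeg_ge_lower_bound
    (q : ℕ) (F : Type*) [Field F] [Fintype F] (hF : Fintype.card F = q)
    (L : Type*) [LieRing L] [LieAlgebra F L] [Finite L]
    (t : ℕ) (ht : Module.finrank F (L ⧸ LieAlgebra.center F L) = t) :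
    commDeg L ≥
      1 / (q : ℚ) ^ (t : ℤ) + 1 / (q : ℚ) ^ ((t : ℤ) - 1) - 1 / (q : ℚ) ^ (2 * (t : ℤ) - 1) := by
  have hq : (q : ℚ) ≠ 0 := by
    rw [← hF, Nat.cast_ne_zero]
    exact Fintype.card_ne_zero
  have hd := commDeg_ge_of_center F L
  rw [natCard_center_div_natCard, ht, Nat.card_eq_fintype_card, hF] at hd
  refine le_of_eq_of_le ?_ hd
  simp only [zpow_sub₀ hq, zpow_neg, zpow_mul, zpow_natCast, zpow_one]
  field_simp
  ring
end

section
/- Let L be a finite-dimensional Lie algebra over the finite field F_q and N an ideal of L such that N ∩ L² = 0, where L² = [L, L] is the derived subalgebra. Then d(L) = d(L/N) · d(N). -/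
abbrev commutingPairs (L : Type*) [LieRing L] : Type _ := {p : L × L // ⁅p.1, p.2⁆ = 0}

lemma commDeg_eq_card_commutingPairs_div (L : Type*) [LieRing L] :
    commDeg L = Nat.card (commutingPairs L) / (Nat.card L : ℚ) ^ 2 := rfl

lemma card_commutingPairs_of_isLieAbelian (L : Type*) [LieRing L] [IsLieAbelian L] :
    Nat.card (commutingPairs L) = Nat.card L ^ 2 := by
  rw [Nat.card_congr (Equiv.subtypeUnivEquiv fun p : L × L => trivial_lie_zero L L p.1 p.2),
    Nat.card_prod, sq]

namespace LieIdeal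

open LieSubmodule.Quotient

variable {R L : Type*} [CommRing R] [LieRing L] [LieAlgebra R L] {N : LieIdeal R L}

lemma lie_eq_zero_of_lie_mem (hN : N ⊓ ⁅(⊤ : LieIdeal R L), ⊤⁆ = ⊥) {x y : L}
    (h : ⁅x, y⁆ ∈ N) : ⁅x, y⁆ = 0 := by
  have : ⁅x, y⁆ ∈ N ⊓ ⁅(⊤ : LieIdeal R L), ⊤⁆ :=
    ⟨h, LieSubmodule.lie_mem_lie (LieSubmodule.mem_top x) (LieSubmodule.mem_top y)⟩
  simpa [hN] using this

lemma le_center_of_inf_derived_eq_bot (hN : N ⊓ ⁅(⊤ : LieIdeal R L), ⊤⁆ = ⊥) :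
    N ≤ LieAlgebra.center R L := fun n hn =>
  (LieModule.mem_maxTrivSubmodule R L L n).2 fun _ => lie_eq_zero_of_lie_mem hN (N.lie_mem hn)

lemma lie_eq_zero_iff_lie_mk_eq_zero (hN : N ⊓ ⁅(⊤ : LieIdeal R L), ⊤⁆ = ⊥) (x y : L) :
    ⁅x, y⁆ = 0 ↔ ⁅(mk x : L ⧸ N), (mk y : L ⧸ N)⁆ = 0 := by
  rw [← mk_bracket, mk_eq_zero']
  exact ⟨fun h => h ▸ N.zero_mem, lie_eq_zero_of_lie_mem hN⟩

variable (N) in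
noncomputable def equivQuotientProd : L ≃ (L ⧸ N) × N :=
  AddSubgroup.addGroupEquivQuotientProdAddSubgroup (s := N.toSubmodule.toAddSubgroup)

variable (N) in
lemma card_eq_card_quotient_mul_card : Nat.card L = Nat.card (L ⧸ N) * Nat.card N :=
  (Nat.card_congr (equivQuotientProd N)).trans (Nat.card_prod _ _)

lemma card_commutingPairs_eq (hN : N ⊓ ⁅(⊤ : LieIdeal R L), ⊤⁆ = ⊥) :
    Nat.card (commutingPairs L) = Nat.card (commutingPairs (L ⧸ N)) * Nat.card N ^ 2 := by
  let e : L × L ≃ ((L ⧸ N) × (L ⧸ N)) × (N × N) :=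
    ((equivQuotientProd N).prodCongr (equivQuotientProd N)).trans (Equiv.prodProdProdComm _ _ _ _)
  -- `(e p).1` is `(mk p.1, mk p.2)` by definition.
  have hcard := Nat.card_congr <|
    (e.subtypeEquiv (q := fun s => ⁅s.1.1, s.1.2⁆ = 0)
      fun p => lie_eq_zero_iff_lie_mk_eq_zero hN p.1 p.2).trans
    (Equiv.prodSubtypeFstEquivSubtypeProd (p := fun r : (L ⧸ N) × (L ⧸ N) => ⁅r.1, r.2⁆ = 0))
  rw [hcard, Nat.card_prod, Nat.card_prod, sq]

end LieIdeal

theorem commDeg_eq_commDeg_quotient_mul_general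
    (F : Type*) [Field F]
    (L : Type*) [LieRing L] [LieAlgebra F L]
    (N : LieIdeal F L)
    (hN : N ⊓ ⁅(⊤ : LieIdeal F L), (⊤ : LieIdeal F L)⁆ = ⊥) :
    commDeg L = commDeg (L ⧸ N) * commDeg N := by
  have := LieAlgebra.abelian_of_le_center F L N (LieIdeal.le_center_of_inf_derived_eq_bot hN)
  rw [commDeg_eq_card_commutingPairs_div, commDeg_eq_card_commutingPairs_div,
    commDeg_eq_card_commutingPairs_div, LieIdeal.card_commutingPairs_eq hN,
    card_commutingPairs_of_isLieAbelian N, LieIdeal.card_eq_card_quotient_mul_card N]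
  push_cast
  rw [mul_pow, mul_div_mul_comm]

/-- If `L` is a finite-dimensional Lie algebra over the finite field `F_q`
and `N` is an ideal of `L` with `N ∩ L² = 0` (where `L² = ⁅L, L⁆` is the derived subalgebra),
then `d(L) = d(L/N) · d(N)`. -/
theorem commDeg_eq_commDeg_quotient_mul
    (F : Type*) [Field F] [Fintype F]
    (L : Type*) [LieRing L] [LieAlgebra F L] [Finite L]
    (N : LieIdeal F L)
    (hN : N ⊓ ⁅(⊤ : LieIdeal F L), (⊤ : LieIdeal F L)⁆ = ⊥) :
    commDeg L = commDeg (L ⧸ N) * commDeg N :=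
  commDeg_eq_commDeg_quotient_mul_general F L N hN
end
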